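/- arXiv:1904.05492 — 7 statements merged into one kernel-verified Lean document; each statement's English description precedes it below -/
import Mathlib

section
/- For all integers n ≥ 21, P(n) = 7·P(n-7) + P(n-14) + P(n-21). -/
def padovan : ℕ → ℤ
  | 0 => 1
  | 1 => 1
  | 2 => 1
  | n + 3 => padovan (n + 1) + padovan n

lemma padovan_aux : ∀ m, padovan (m + 21) = 7 * padovan (m + 14) + padovan (m + 7) + padovan m := by
  intro m
  induction m using Nat.strong_induction_on with
  | _ m ih =>
    match m with
    | 0 => simp [padovan]
    | 1 => simp [padovan]
    | 2 => simp [padovan]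
    | (k+3) =>
      have h1 := ih (k+1) (by omega)
      have h0 := ih k (by omega)
      have e : padovan (k+3+21) = padovan (k+1+21) + padovan (k+21) := by
        show padovan (k+21+3) = _
        rw [padovan]
      have e2 : padovan (k+3+14) = padovan (k+1+14) + padovan (k+14) := by
        show padovan (k+14+3) = _
        rw [padovan]
      have e3 : padovan (k+3+7) = padovan (k+1+7) + padovan (k+7) := by
        show padovan (k+7+3) = _
        rw [padovan]
      have e4 : padovan (k+3) = padovan (k+1) + padovan k := by rw [padovan]
      rw [e, e2, e3, e4, h1, h0]; ring

theorem padovan_shift_7 (n : ℕ) (hn : 21 ≤ n) :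
    padovan n = 7 * padovan (n - 7) + padovan (n - 14) + padovan (n - 21) := by
  obtain ⟨m, rfl⟩ : ∃ m, n = m + 21 := ⟨n - 21, by omega⟩
  have : m + 21 - 7 = m + 14 := by omega
  rw [this]
  have : m + 21 - 14 = m + 7 := by omega
  rw [this]
  have : m + 21 - 21 = m := by omega
  rw [this]
  exact padovan_aux m
end

section
/- For all integers a and n, P(n) = ρ(a)·P(n-a) + σ(a)·P(n-2a) + P(n-3a), where ρ(a) = 3·P(a-2) - P(a-4) and σ(a) = -ρ(-a) = -(3·P(-a-2) - P(-a-4)). -/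
/-!
Let `C` be the companion matrix of `x³ = x + 1`. It has determinant `1`, and the entries of `C ^ n`
are values of `P` near `n`; in particular `tr (C ^ a) = ρ(a)`. Cayley–Hamilton for `A = C ^ a` reads
`A³ - tr(A) A² + tr(adj A) A = 1`, and since `det A = 1` we have `adj A = C ^ (-a)`, whose trace is
`ρ(-a) = -σ(a)`. Multiplying by `C ^ (n - 3a)` and reading off one entry gives the identity.
-/

open Matrix

namespace Matrix

section

variable {n R : Type*} [Fintype n] [DecidableEq n] [CommRing R] {A : Matrix n n R}

theorem adjugate_eq_inv_of_det_eq_one (hA : A.det = 1) : A.adjugate = A⁻¹ := by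
  rw [inv_def, hA, Ring.inverse_one, one_smul]

theorem det_zpow_eq_one (hA : A.det = 1) (k : ℤ) : (A ^ k).det = 1 := by
  cases k with
  | ofNat m => simp [det_pow, hA]
  | negSucc m => simp [zpow_negSucc, det_nonsing_inv, det_pow, hA]

end

variable {R : Type*} [CommRing R]

theorem pow_three_sub_trace_smul_add_trace_adjugate_smul (A : Matrix (Fin 3) (Fin 3) R) :
    A ^ 3 - A.trace • A ^ 2 + A.adjugate.trace • A = A.det • 1 := by
  ext i j
  fin_cases i <;> fin_cases j <;>
    simp [pow_succ, mul_apply, Fin.sum_univ_three, trace_fin_three, adjugate_fin_three,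
      det_fin_three] <;> ring

theorem zpow_eq_of_det_eq_one {A : Matrix (Fin 3) (Fin 3) R} (hA : A.det = 1) (a n : ℤ) :
    A ^ n = (A ^ a).trace • A ^ (n - a) - (A ^ (-a)).trace • A ^ (n - 2 * a) + A ^ (n - 3 * a) := by
  have hunit : IsUnit A.det := hA ▸ isUnit_one
  have hmul (k : ℕ) (m : ℤ) (hm : m = k * a + (n - 3 * a)) :
      (A ^ a) ^ k * A ^ (n - 3 * a) = A ^ m := by
    rw [← zpow_natCast, ← zpow_mul A hunit, ← zpow_add hunit, hm, mul_comm]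
  have hch := (A ^ a).pow_three_sub_trace_smul_add_trace_adjugate_smul
  rw [det_zpow_eq_one hA, one_smul, adjugate_eq_inv_of_det_eq_one (det_zpow_eq_one hA a),
    ← zpow_neg hunit] at hch
  have key := congrArg (· * A ^ (n - 3 * a)) hch
  simp only [sub_mul, add_mul, smul_mul_assoc, one_mul] at key
  rw [hmul 3 n (by ring), hmul 2 (n - a) (by ring), ← zpow_add hunit,
    show a + (n - 3 * a) = n - 2 * a by ring] at key
  rw [← key]
  abel

end Matrix

def padovanCompanion : Matrix (Fin 3) (Fin 3) ℤ := !![0, 1, 0; 0, 0, 1; 1, 1, 0]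

theorem det_padovanCompanion : padovanCompanion.det = 1 := by
  simp [padovanCompanion, det_fin_three]

/-- Column `j` is `(P k, P (k + 1), P (k + 2))` for `k = n - 5, n - 3, n - 4`; these shifts make
`padovanMatrix P 0 = 1`, since `P` vanishes at `-1, -3, -4` and equals `1` at `-2, -5`. -/
def padovanMatrix (P : ℤ → ℤ) (n : ℤ) : Matrix (Fin 3) (Fin 3) ℤ :=
  !![P (n - 5), P (n - 3), P (n - 4); P (n - 4), P (n - 2), P (n - 3); P (n - 3), P (n - 1), P (n - 2)]

section Padovan

variable {P : ℤ → ℤ}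

theorem padovanMatrix_apply_zero_one (n : ℤ) : padovanMatrix P n 0 1 = P (n - 3) := rfl

theorem padovan_eq_sub_two_add_sub_three (hrec : ∀ n : ℤ, P (n + 3) = P (n + 1) + P n) (n : ℤ) :
    P n = P (n - 2) + P (n - 3) := by
  have := hrec (n - 3)
  rwa [sub_add_cancel, show n - 3 + 1 = n - 2 by ring] at this

theorem padovanMatrix_add_one (hrec : ∀ n : ℤ, P (n + 3) = P (n + 1) + P n) (n : ℤ) :
    padovanMatrix P (n + 1) = padovanMatrix P n * padovanCompanion := by
  have r0 := padovan_eq_sub_two_add_sub_three hrec n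
  have r1 := padovan_eq_sub_two_add_sub_three hrec (n - 1)
  have r2 := padovan_eq_sub_two_add_sub_three hrec (n - 2)
  ext i j
  fin_cases i <;> fin_cases j <;>
    simp [padovanMatrix, padovanCompanion, mul_apply, Fin.sum_univ_three] <;>
    ring_nf at r0 r1 r2 ⊢ <;> linarith

theorem padovanMatrix_zero (h0 : P 0 = 1) (h1 : P 1 = 1) (h2 : P 2 = 1)
    (hrec : ∀ n : ℤ, P (n + 3) = P (n + 1) + P n) : padovanMatrix P 0 = 1 := by
  have e1 := hrec (-1)
  have e2 := hrec (-2)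
  have e3 := hrec (-3)
  have e4 := hrec (-4)
  have e5 := hrec (-5)
  norm_num at e1 e2 e3 e4 e5
  have hm1 : P (-1) = 0 := by linarith
  have hm2 : P (-2) = 1 := by linarith
  have hm3 : P (-3) = 0 := by linarith
  have hm4 : P (-4) = 0 := by linarith
  have hm5 : P (-5) = 1 := by linarith
  ext i j
  fin_cases i <;> fin_cases j <;> simp [padovanMatrix, hm1, hm2, hm3, hm4, hm5]

theorem padovanMatrix_eq_zpow (h0 : P 0 = 1) (h1 : P 1 = 1) (h2 : P 2 = 1)
    (hrec : ∀ n : ℤ, P (n + 3) = P (n + 1) + P n) (n : ℤ) :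
    padovanMatrix P n = padovanCompanion ^ n := by
  have hunit : IsUnit padovanCompanion.det := det_padovanCompanion ▸ isUnit_one
  induction n using Int.induction_on with
  | zero => rw [zpow_zero, padovanMatrix_zero h0 h1 h2 hrec]
  | succ k ih => rw [padovanMatrix_add_one hrec, ih, zpow_add_one hunit]
  | pred k ih =>
    rw [zpow_sub_one hunit, ← ih, ← sub_add_cancel (-(k : ℤ)) 1, padovanMatrix_add_one hrec,
      sub_add_cancel, mul_nonsing_inv_cancel_right _ _ hunit]

theorem trace_padovanMatrix (hrec : ∀ n : ℤ, P (n + 3) = P (n + 1) + P n) (n : ℤ) :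
    (padovanMatrix P n).trace = 3 * P (n - 2) - P (n - 4) := by
  have hr := padovan_eq_sub_two_add_sub_three hrec (n - 2)
  rw [show n - 2 - 2 = n - 4 by ring, show n - 2 - 3 = n - 5 by ring] at hr
  rw [trace_fin_three]
  change P (n - 5) + P (n - 2) + P (n - 2) = _
  linarith

end Padovan

theorem padovan_rho_sigma (P : ℤ → ℤ) (h0 : P 0 = 1) (h1 : P 1 = 1) (h2 : P 2 = 1)
    (hrec : ∀ n : ℤ, P (n + 3) = P (n + 1) + P n) (a n : ℤ) :
    P n = (3 * P (a - 2) - P (a - 4)) * P (n - a)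
      + (-(3 * P (-a - 2) - P (-a - 4))) * P (n - 2 * a) + P (n - 3 * a) := by
  have key := congrFun (congrFun (zpow_eq_of_det_eq_one det_padovanCompanion a (n + 3)) 0) 1
  simp only [← padovanMatrix_eq_zpow h0 h1 h2 hrec, trace_padovanMatrix hrec, Matrix.add_apply,
    Matrix.sub_apply, Matrix.smul_apply, smul_eq_mul, padovanMatrix_apply_zero_one,
    sub_right_comm _ _ (3 : ℤ), add_sub_cancel_right] at key
  linear_combination key
end

section
/- For all integers n, P(n+1) = Q(n) + Q(n-1) - Q(n-3), where Q(n) = P(n) + P(-n). -/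
theorem padovan_Q_identity (P : ℤ → ℤ) (h0 : P 0 = 1) (h1 : P 1 = 1) (h2 : P 2 = 1)
    (hrec : ∀ n : ℤ, P (n + 3) = P (n + 1) + P n) (n : ℤ) :
    P (n + 1) = (P n + P (-n)) + (P (n - 1) + P (-(n - 1))) - (P (n - 3) + P (-(n - 3))) := by
  have a := hrec (n - 2)
  rw [show n - 2 + 3 = n + 1 by ring, show n - 2 + 1 = n - 1 by ring] at a
  have b := hrec (n - 3)
  rw [show n - 3 + 3 = n by ring, show n - 3 + 1 = n - 2 by ring] at b
  have c := hrec (-n)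
  rw [show -n + 3 = -(n - 3) by ring, show -n + 1 = -(n - 1) by ring] at c
  linarith
end

section
/- For all m ≥ 0, the sum ∑_{k=0}^{m} P(4k) equals (P(4(m+1)) + 4·P(4m) + P(4(m-1)) - 1)/5, where P(-4) is interpreted via the backward extension of the Padovan recurrence (P(-4) = 0); equivalently, 5·∑_{k=0}^{m} P(4k) = P(4m+4) + 4·P(4m) + P(4m-4) - 1. -/
/-!
The quadrisection `j ↦ P (4 * j)` satisfies `Q (j + 3) = 2 Q (j + 2) + 3 Q (j + 1) + Q j`: if
`r³ = r + 1` then `y = r⁴` satisfies `y³ = 2y² + 3y + 1`. For any sequence with this recurrence the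
quantity `Q (m + 1) + 4 Q m + Q (m - 1) - 5 ∑_{k ≤ m} Q k` does not depend on `m`, and for the
Padovan sequence its value `P 4 - P 0 + P (-4)` is `2 - 1 + 0 = 1`.
-/

open Finset

section Recurrence

variable {R : Type*} [CommRing R]

theorem padovan_add_twelve {P : ℤ → R} (hrec : ∀ n, P (n + 3) = P (n + 1) + P n) (n : ℤ) :
    P (n + 12) = 2 * P (n + 8) + 3 * P (n + 4) + P n := by
  -- x¹² - 2x⁸ - 3x⁴ - 1 = (x³ - x - 1)(x⁹ + x⁷ + x⁶ - x⁵ + 2x⁴ + x² - x + 1)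
  linear_combination (norm := ring_nf) hrec n - hrec (n + 1) + hrec (n + 2) + 2 * hrec (n + 4)
    - hrec (n + 5) + hrec (n + 6) + hrec (n + 7) + hrec (n + 9)

theorem five_mul_sum_range_of_recurrence {Q : ℤ → R}
    (hQ : ∀ j, Q (j + 3) = 2 * Q (j + 2) + 3 * Q (j + 1) + Q j) (m : ℕ) :
    5 * ∑ k ∈ range (m + 1), Q k = Q (m + 1) + 4 * Q m + Q (m - 1) - (Q 1 - Q 0 + Q (-1)) := by
  induction m with
  | zero => simp only [sum_range_one, Nat.cast_zero, zero_add, zero_sub]; ring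
  | succ m ih =>
    rw [sum_range_succ, mul_add, ih]
    push_cast
    linear_combination (norm := ring_nf) -hQ (m - 1)

end Recurrence

theorem padovan_sum_4k (P : ℤ → ℤ) (h0 : P 0 = 1) (h1 : P 1 = 1) (h2 : P 2 = 1)
    (hrec : ∀ n : ℤ, P (n + 3) = P (n + 1) + P n) (m : ℕ) :
    5 * ∑ k ∈ Finset.range (m + 1), P (4 * k)
      = P (4 * m + 4) + 4 * P (4 * m) + P (4 * (m : ℤ) - 4) - 1 := by
  have hquad (j : ℤ) :
      P (4 * (j + 3)) = 2 * P (4 * (j + 2)) + 3 * P (4 * (j + 1)) + P (4 * j) := by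
    convert padovan_add_twelve hrec (4 * j) using 2 <;> ring_nf
  have h4 : P 4 = 2 := by linear_combination (norm := ring_nf) hrec 1 + h2 + h1
  have hneg4 : P (-4) = 0 := by
    linear_combination (norm := ring_nf) -hrec (-4) + hrec (-3) - hrec (-2) + h1 - h0
  have key := five_mul_sum_range_of_recurrence (Q := fun j ↦ P (4 * j)) hquad m
  simp only [mul_add, mul_sub, mul_one, mul_zero, mul_neg, h0, h4, hneg4] at key
  rw [key]
  ring
end

section
/- For each b ∈ {1,2,3} and all m ≥ 3, the partial sums r(m) = ∑_{k=0}^{m} P(3k+b) satisfy r(m) = 3·r(m-1) - 2·r(m-2) + r(m-3) + 1. -/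
/-
Every third Padovan number obeys `a (k + 3) = 3 a (k + 2) - 2 a (k + 1) + a k`, the recurrence whose
characteristic roots are the cubes of those of `x ^ 3 = x + 1`. The partial sums of any such sequence
satisfy the same recurrence up to a constant, `a 2 - 2 a 1`, which for the columns starting at
`b + 1` is `padovan b`.
-/

open Finset

theorem sum_range_add_four_of_recurrence {R : Type*} [CommRing R] (a : ℕ → R)
    (ha : ∀ k, a (k + 3) = 3 * a (k + 2) - 2 * a (k + 1) + a k) (n : ℕ) :
    ∑ k ∈ range (n + 4), a k
      = 3 * ∑ k ∈ range (n + 3), a k - 2 * ∑ k ∈ range (n + 2), a k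
        + ∑ k ∈ range (n + 1), a k + (a 2 - 2 * a 1) := by
  induction n with
  | zero =>
    simp only [sum_range_succ, sum_range_zero]
    linear_combination ha 0
  | succ n ih =>
    simp only [sum_range_succ] at ih ⊢
    linear_combination ih + ha (n + 1)

theorem padovan_add_nine (n : ℕ) :
    padovan (n + 9) = 3 * padovan (n + 6) - 2 * padovan (n + 3) + padovan n := by
  simp only [padovan]
  ring

theorem padovan_add_seven_sub_two_mul (b : ℕ) :
    padovan (b + 7) - 2 * padovan (b + 4) = padovan b := by
  simp only [padovan]
  ring

theorem sum_range_padovan_three_mul_add_succ (b n : ℕ) :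
    ∑ k ∈ range (n + 4), padovan (3 * k + (b + 1))
      = 3 * ∑ k ∈ range (n + 3), padovan (3 * k + (b + 1))
        - 2 * ∑ k ∈ range (n + 2), padovan (3 * k + (b + 1))
        + ∑ k ∈ range (n + 1), padovan (3 * k + (b + 1)) + padovan b := by
  have hcol (k : ℕ) : padovan (3 * (k + 3) + (b + 1))
      = 3 * padovan (3 * (k + 2) + (b + 1)) - 2 * padovan (3 * (k + 1) + (b + 1))
        + padovan (3 * k + (b + 1)) := by
    rw [show 3 * (k + 3) + (b + 1) = 3 * k + (b + 1) + 9 by ring,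
      show 3 * (k + 2) + (b + 1) = 3 * k + (b + 1) + 6 by ring,
      show 3 * (k + 1) + (b + 1) = 3 * k + (b + 1) + 3 by ring]
    exact padovan_add_nine _
  have hconst : padovan (3 * 2 + (b + 1)) - 2 * padovan (3 * 1 + (b + 1)) = padovan b := by
    rw [show 3 * 2 + (b + 1) = b + 7 by ring, show 3 * 1 + (b + 1) = b + 4 by ring]
    exact padovan_add_seven_sub_two_mul b
  rw [sum_range_add_four_of_recurrence _ hcol, hconst]

theorem padovan_col_sum_3 (b : ℕ) (hb : b = 1 ∨ b = 2 ∨ b = 3) (m : ℕ) (hm : 3 ≤ m) :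
    (∑ k ∈ Finset.range (m + 1), padovan (3 * k + b))
      = 3 * (∑ k ∈ Finset.range m, padovan (3 * k + b))
        - 2 * (∑ k ∈ Finset.range (m - 1), padovan (3 * k + b))
        + (∑ k ∈ Finset.range (m - 2), padovan (3 * k + b)) + 1 := by
  obtain ⟨n, rfl⟩ := Nat.exists_eq_add_of_le' hm
  obtain ⟨c, rfl, hc⟩ : ∃ c, b = c + 1 ∧ padovan c = 1 := by
    rcases hb with rfl | rfl | rfl <;> exact ⟨_, rfl, rfl⟩
  rw [← hc]
  exact sum_range_padovan_three_mul_add_succ c n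
end

section
/- For all m ≥ 3, the partial sums r(m) = ∑_{k=0}^{m} P(4k+1) satisfy r(m) = 2·r(m-1) + 3·r(m-2) + r(m-3) + 2. -/
lemma pad12 : ∀ n, padovan (n + 12) =
    2 * padovan (n + 8) + 3 * padovan (n + 4) + padovan n := by
  have key : ∀ n, padovan (n + 12) = 2 * padovan (n + 8) + 3 * padovan (n + 4) + padovan n
      ∧ padovan (n + 13) = 2 * padovan (n + 9) + 3 * padovan (n + 5) + padovan (n + 1)
      ∧ padovan (n + 14) = 2 * padovan (n + 10) + 3 * padovan (n + 6) + padovan (n + 2) := by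
    intro n
    induction n with
    | zero => refine ⟨?_, ?_, ?_⟩ <;> simp [padovan]
    | succ k ih =>
      obtain ⟨h0, h1, h2⟩ := ih
      refine ⟨h1, h2, ?_⟩
      have e : ∀ j, padovan (j + 3) = padovan (j + 1) + padovan j := fun j => rfl
      calc padovan (k + 1 + 14) = padovan (k + 13) + padovan (k + 12) := e (k + 12)
        _ = 2 * padovan (k + 1 + 10) + 3 * padovan (k + 1 + 6) + padovan (k + 1 + 2) := by
            rw [h0, h1]
            have e1 : padovan (k + 11) = padovan (k + 9) + padovan (k + 8) := e (k + 8)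
            have e2 : padovan (k + 7) = padovan (k + 5) + padovan (k + 4) := e (k + 4)
            have e3 : padovan (k + 3) = padovan (k + 1) + padovan k := e k
            have n1 : k + 1 + 10 = k + 11 := by ring
            have n2 : k + 1 + 6 = k + 7 := by ring
            have n3 : k + 1 + 2 = k + 3 := by ring
            rw [n1, n2, n3, e1, e2, e3]; ring
  exact fun n => (key n).1

theorem padovan_col_sum_4_1 (m : ℕ) (hm : 3 ≤ m) :
    (∑ k ∈ Finset.range (m + 1), padovan (4 * k + 1))
      = 2 * (∑ k ∈ Finset.range m, padovan (4 * k + 1))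
        + 3 * (∑ k ∈ Finset.range (m - 1), padovan (4 * k + 1))
        + (∑ k ∈ Finset.range (m - 2), padovan (4 * k + 1)) + 2 := by
  obtain ⟨n, rfl⟩ : ∃ n, m = n + 3 := ⟨m - 3, by omega⟩
  have h1 : n + 3 - 1 = n + 2 := by omega
  have h2 : n + 3 - 2 = n + 1 := by omega
  rw [h1, h2]
  clear hm
  induction n with
  | zero =>
    simp [Finset.sum_range_succ, padovan]
  | succ k ih =>
    rw [show k + 1 + 3 + 1 = (k + 3 + 1) + 1 from rfl,
      Finset.sum_range_succ _ (k + 3 + 1),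
      show k + 1 + 3 = (k + 3) + 1 from rfl, Finset.sum_range_succ _ (k + 3),
      show k + 1 + 2 = (k + 2) + 1 from rfl, Finset.sum_range_succ _ (k + 2),
      show k + 1 + 1 = (k + 1) + 1 from rfl, Finset.sum_range_succ _ (k + 1)]
    have hp := pad12 (4 * k + 5)
    have e1 : 4 * (k + 3 + 1) + 1 = 4 * k + 5 + 12 := by ring
    have e2 : 4 * (k + 3) + 1 = 4 * k + 5 + 8 := by ring
    have e3 : 4 * (k + 2) + 1 = 4 * k + 5 + 4 := by ring
    have e4 : 4 * (k + 1) + 1 = 4 * k + 5 := by ring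
    rw [e1, e2, e3, e4, hp]
    have ih' := ih (by omega) (by omega)
    rw [show k + 3 + 1 = (k + 2) + 1 + 1 from rfl, Finset.sum_range_succ _ ((k + 2) + 1),
      Finset.sum_range_succ _ (k + 2), Finset.sum_range_succ _ (k + 1),
      show (k + 2) + 1 = k + 3 from rfl, e2, e3, e4] at ih'
    linarith [ih']
end

section
/- For any integers a, t with t ≥ 4 and any b, P(a·t + b) = (ρ(a)² + σ(a))·P(a(t-2)+b) + (ρ(a)·σ(a) + 1)·P(a(t-3)+b) + ρ(a)·P(a(t-4)+b), where ρ(a) = 3·P(a-2) - P(a-4) and σ(a) = -ρ(-a). -/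
/-!
Let `S ∈ SL₃(ℤ)` be the companion matrix of `x³ - x - 1`, which shifts the window
`(P n, P (n+1), P (n+2))` to the window at `n + 1`. Cayley–Hamilton for `A = S ^ a`, whose
determinant is `1` and whose adjugate is `S ^ (-a)`, reads
`A³ = tr (S ^ a) • A² - tr (S ^ (-a)) • A + 1`. Applied to the window at `n` this gives
`P (n + 3a) = ρ(a) P (n + 2a) + σ(a) P (n + a) + P n`, because `tr (S ^ k) = 3 P (k-2) - P (k-4)`
is the Perrin number. Using this relation twice yields the theorem.
-/

theorem zpow_smul_of_smul_eq {G X : Type*} [Group G] [MulAction G X] {g : G} {f : ℤ → X}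
    (hf : ∀ n, g • f n = f (n + 1)) (k n : ℤ) : g ^ k • f n = f (n + k) := by
  induction k using Int.induction_on generalizing n with
  | zero => simp
  | succ k ih => rw [zpow_add_one, mul_smul, hf, ih, add_right_comm, add_assoc]
  | pred k ih =>
    have hinv : g⁻¹ • f n = f (n - 1) := by rw [inv_smul_eq_iff, hf, sub_add_cancel]
    rw [zpow_sub_one, mul_smul, hinv, ih, sub_add_eq_add_sub, add_sub_assoc]

namespace Matrix

theorem cayleyHamilton_fin_three {R : Type*} [CommRing R] (M : Matrix (Fin 3) (Fin 3) R) :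
    M ^ 3 - trace M • M ^ 2 + trace (adjugate M) • M - det M • (1 : Matrix (Fin 3) (Fin 3) R)
      = 0 := by
  ext i j
  fin_cases i <;> fin_cases j <;>
    simp [pow_succ, mul_apply, Fin.sum_univ_three, trace_fin_three, adjugate_fin_three,
      det_fin_three] <;> ring

theorem SpecialLinearGroup.pow_three_smul {R : Type*} [CommRing R]
    (A : SpecialLinearGroup (Fin 3) R) (v : Fin 3 → R) :
    A ^ 3 • v = trace A.1 • A ^ 2 • v - trace A⁻¹.1 • A • v + v := by
  have h := congrArg (· *ᵥ v) (cayleyHamilton_fin_three A.1)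
  simp only [sub_mulVec, add_mulVec, smul_mulVec, zero_mulVec, det_coe, one_smul,
    one_mulVec] at h
  simp only [SpecialLinearGroup.smul_def, coe_pow, coe_inv, smul_eq_mulVec]
  rw [← sub_eq_zero, ← h]
  abel

end Matrix

namespace Padovan

def shift : Matrix.SpecialLinearGroup (Fin 3) ℤ :=
  ⟨!![0, 1, 0; 0, 0, 1; 1, 1, 0], by simp [Matrix.det_fin_three]⟩

theorem coe_shift : shift.1 = !![0, 1, 0; 0, 0, 1; 1, 1, 0] := rfl

def window (P : ℤ → ℤ) (n : ℤ) : Fin 3 → ℤ := ![P n, P (n + 1), P (n + 2)]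

variable {P : ℤ → ℤ} (hrec : ∀ n : ℤ, P (n + 3) = P (n + 1) + P n)
include hrec

theorem shift_smul_window (n : ℤ) : shift • window P n = window P (n + 1) := by
  have h3 := hrec n
  ext i
  rw [Matrix.SpecialLinearGroup.smul_def, coe_shift, Matrix.smul_eq_mulVec]
  fin_cases i <;> simp [window, Matrix.vecHead, Matrix.vecTail] <;> ring_nf at h3 ⊢
  exact h3.symm

theorem shift_zpow_smul_window (k n : ℤ) : shift ^ k • window P n = window P (n + k) :=
  zpow_smul_of_smul_eq (shift_smul_window hrec) k n

theorem trace_shift_zpow (h0 : P 0 = 1) (h1 : P 1 = 1) (h2 : P 2 = 1) (k : ℤ) :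
    Matrix.trace (shift ^ k).1 = 3 * P (k - 2) - P (k - 4) := by
  have hm1 : P (-1) = 0 := by linear_combination (norm := ring_nf) h2 - h0 - hrec (-1)
  have hm2 : P (-2) = 1 := by linear_combination (norm := ring_nf) h1 - hm1 - hrec (-2)
  have hm3 : P (-3) = 0 := by linear_combination (norm := ring_nf) h0 - hm2 - hrec (-3)
  have hm4 : P (-4) = 0 := by linear_combination (norm := ring_nf) hm1 - hm3 - hrec (-4)
  -- the standard basis consists of windows, so the columns of `shift ^ k` are windows too
  have e0 : window P (-2) - window P (-4) = Pi.single 0 1 := by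
    ext i; fin_cases i <;> simp [window, hm1, hm2, hm3, hm4, h0]
  have e1 : window P (-3) = Pi.single 1 1 := by
    ext i; fin_cases i <;> simp [window, hm1, hm2, hm3]
  have e2 : window P (-4) = Pi.single 2 1 := by
    ext i; fin_cases i <;> simp [window, hm2, hm3, hm4]
  have diag (i : Fin 3) : (shift ^ k).1 i i = (shift ^ k • Pi.single i 1 : Fin 3 → ℤ) i := by
    rw [Matrix.SpecialLinearGroup.smul_def, Matrix.smul_eq_mulVec, Matrix.mulVec_single_one,
      Matrix.col_apply]
  rw [Matrix.trace_fin_three, diag, diag, diag, ← e0, ← e1, ← e2, smul_sub,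
    shift_zpow_smul_window hrec, shift_zpow_smul_window hrec, shift_zpow_smul_window hrec]
  simp only [window, Pi.sub_apply, Matrix.cons_val_zero, Matrix.cons_val_one, Matrix.cons_val]
  ring_nf

theorem apply_add_three_mul (h0 : P 0 = 1) (h1 : P 1 = 1) (h2 : P 2 = 1) (a n : ℤ) :
    P (n + 3 * a) = (3 * P (a - 2) - P (a - 4)) * P (n + 2 * a)
      + (-(3 * P (-a - 2) - P (-a - 4))) * P (n + a) + P n := by
  have h := congrFun (Matrix.SpecialLinearGroup.pow_three_smul (shift ^ a) (window P n)) 0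
  rw [← zpow_neg, trace_shift_zpow hrec h0 h1 h2, trace_shift_zpow hrec h0 h1 h2] at h
  simp only [← zpow_natCast, ← zpow_mul, shift_zpow_smul_window hrec] at h
  simp only [window, Nat.cast_ofNat, Pi.add_apply, Pi.sub_apply, Pi.smul_apply,
    Matrix.cons_val_zero, smul_eq_mul] at h
  linear_combination (norm := ring_nf) h

end Padovan

theorem padovan_iterated_general (P : ℤ → ℤ) (h0 : P 0 = 1) (h1 : P 1 = 1) (h2 : P 2 = 1)
    (hrec : ∀ n : ℤ, P (n + 3) = P (n + 1) + P n) (a b t : ℤ) :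
    P (a * t + b)
      = ((3 * P (a - 2) - P (a - 4)) ^ 2 + (-(3 * P (-a - 2) - P (-a - 4)))) * P (a * (t - 2) + b)
        + ((3 * P (a - 2) - P (a - 4)) * (-(3 * P (-a - 2) - P (-a - 4))) + 1) * P (a * (t - 3) + b)
        + (3 * P (a - 2) - P (a - 4)) * P (a * (t - 4) + b) := by
  have h₃ := Padovan.apply_add_three_mul hrec h0 h1 h2 a (a * (t - 3) + b)
  have h₄ := Padovan.apply_add_three_mul hrec h0 h1 h2 a (a * (t - 4) + b)
  linear_combination (norm := ring_nf) h₃ + (3 * P (a - 2) - P (a - 4)) * h₄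

theorem padovan_iterated (P : ℤ → ℤ) (h0 : P 0 = 1) (h1 : P 1 = 1) (h2 : P 2 = 1)
    (hrec : ∀ n : ℤ, P (n + 3) = P (n + 1) + P n) (a b t : ℤ) (ht : 4 ≤ t) :
    P (a * t + b)
      = ((3 * P (a - 2) - P (a - 4)) ^ 2 + (-(3 * P (-a - 2) - P (-a - 4)))) * P (a * (t - 2) + b)
        + ((3 * P (a - 2) - P (a - 4)) * (-(3 * P (-a - 2) - P (-a - 4))) + 1) * P (a * (t - 3) + b)
        + (3 * P (a - 2) - P (a - 4)) * P (a * (t - 4) + b) :=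
  padovan_iterated_general P h0 h1 h2 hrec a b t
end
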